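/- arXiv:2301.03491 — 5 statements merged into one kernel-verified Lean document; each statement's English description precedes it below -/
import Mathlib

section
/- Let C be a nonempty subset of a finite-dimensional real inner product space E, let λ > 0 and let x ∈ E. Then the Asplund function of the indicator of C satisfies ⨆_{z∈C} ( ⟨z, x⟩/λ − ‖z‖²/(2λ) ) = ( ‖x‖² − d(x, C)² ) / (2λ), where d(x, C) = inf_{c∈C} ‖x − c‖ is the distance from x to C. -/
open scoped RealInnerProductSpace

/-- The Asplund function of the indicator of a nonempty closed set `C`:
`⨆_{z ∈ C} (⟪z, x⟫/λ − ‖z‖²/(2λ)) = (‖x‖² − d(x, C)²) / (2λ)`. -/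
theorem asplund_indicator_eq
    {E : Type*} [NormedAddCommGroup E] [InnerProductSpace ℝ E] [FiniteDimensional ℝ E]
    (C : Set E) (hC : C.Nonempty) (l : ℝ) (hl : 0 < l) (x : E) :
    (⨆ z : C, (⟪(z : E), x⟫ / l - ‖(z : E)‖ ^ 2 / (2 * l))) =
      (‖x‖ ^ 2 - (Metric.infDist x C) ^ 2) / (2 * l) := by
  have hCne : Nonempty C := hC.to_subtype
  set d := Metric.infDist x C with hd
  have hd0 : 0 ≤ d := Metric.infDist_nonneg
  have h2l : (0:ℝ) < 2 * l := by linarith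
  have key : ∀ z : E, ⟪z, x⟫ / l - ‖z‖ ^ 2 / (2 * l)
      = (‖x‖ ^ 2 - ‖x - z‖ ^ 2) / (2 * l) := by
    intro z
    have hns : ‖x - z‖ ^ 2 = ‖x‖ ^ 2 - 2 * ⟪x, z⟫ + ‖z‖ ^ 2 := norm_sub_sq_real x z
    rw [real_inner_comm, hns]
    field_simp
    ring
  have hub : ∀ z : C, ⟪(z:E), x⟫ / l - ‖(z:E)‖ ^ 2 / (2 * l) ≤ (‖x‖ ^ 2 - d ^ 2) / (2 * l) := by
    intro z
    rw [key]
    have hdz : d ≤ ‖x - (z:E)‖ := by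
      rw [← dist_eq_norm]
      exact Metric.infDist_le_dist_of_mem z.2
    have hsq : d ^ 2 ≤ ‖x - (z:E)‖ ^ 2 := by nlinarith
    gcongr
  have hbdd : BddAbove (Set.range fun z : C =>
      ⟪(z:E), x⟫ / l - ‖(z:E)‖ ^ 2 / (2 * l)) := ⟨_, Set.forall_mem_range.mpr hub⟩
  apply le_antisymm (ciSup_le hub)
  refine le_of_forall_lt fun y hy => ?_
  have hy' : d ^ 2 < ‖x‖ ^ 2 - 2 * l * y := by
    rw [lt_div_iff₀ h2l] at hy; linarith
  set s := ‖x‖ ^ 2 - 2 * l * y with hs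
  have hs0 : 0 < s := lt_of_le_of_lt (by positivity) hy'
  have hdr : d < Real.sqrt s := by
    have := Real.sqrt_lt_sqrt (by positivity : (0:ℝ) ≤ d ^ 2) hy'
    rwa [Real.sqrt_sq hd0] at this
  obtain ⟨z, hzC, hz⟩ := (Metric.infDist_lt_iff hC).mp hdr
  have hz2 : ‖x - z‖ ^ 2 < s := by
    rw [dist_eq_norm] at hz
    have h0 : 0 ≤ ‖x - z‖ := norm_nonneg _
    nlinarith [Real.sq_sqrt hs0.le, Real.sqrt_nonneg s]
  have hfz : y < ⟪z, x⟫ / l - ‖z‖ ^ 2 / (2 * l) := by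
    rw [key, lt_div_iff₀ h2l]
    simp only [hs] at hz2
    linarith
  exact hfz.trans_le (le_ciSup hbdd ⟨z, hzC⟩)
end

section
/- Let E be a finite-dimensional real inner product space, let f : E → ℝ be differentiable with gradient ∇f Lipschitz continuous on E with constant L > 0, let ψ : E → ℝ, and let λ ∈ (0, 1/L). Assume that f + ψ is bounded below on E. Define the forward–backward envelope φ_λ(x) := ⨅_{z∈E} ( f(x) + ⟨∇f(x), z − x⟩ + ψ(z) + ‖z − x‖²/(2λ) ). Then ⨅_{x∈E} φ_λ(x) = ⨅_{x∈E} ( f(x) + ψ(x) ). -/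
open scoped RealInnerProductSpace

/-!
By the descent lemma, `f z ≤ f x + ⟪∇f x, z - x⟫ + L/2 ‖z - x‖²`, and `L/2 ≤ 1/(2λ)`, so every
value of the envelope's inner objective at `(x, z)` is at least `f z + ψ z`; on the diagonal
`z = x` it equals `f x + ψ x`. Both infima therefore coincide.
-/

section DescentLemma

variable {E : Type*} [NormedAddCommGroup E] [InnerProductSpace ℝ E] [CompleteSpace E]
  {f : E → ℝ} {L : ℝ}

theorem hasDerivAt_comp_add_smul {x v : E} {t : ℝ} (hf : DifferentiableAt ℝ f (x + t • v)) :
    HasDerivAt (fun s : ℝ => f (x + s • v)) ⟪gradient f (x + t • v), v⟫ t := by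
  have hline : HasDerivAt (fun s : ℝ => x + s • v) v t := by
    simpa using ((hasDerivAt_id t).smul_const v).const_add x
  simpa [InnerProductSpace.toDual_apply_apply, Function.comp_def] using
    hf.hasGradientAt.hasFDerivAt.comp_hasDerivAt t hline

theorem inner_gradient_add_smul_sub_le
    (hlip : ∀ x y : E, ‖gradient f x - gradient f y‖ ≤ L * ‖x - y‖)
    (x v : E) {t : ℝ} (ht : 0 ≤ t) :
    ⟪gradient f (x + t • v) - gradient f x, v⟫ ≤ L * t * ‖v‖ ^ 2 :=
  calc ⟪gradient f (x + t • v) - gradient f x, v⟫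
      ≤ ‖gradient f (x + t • v) - gradient f x‖ * ‖v‖ := real_inner_le_norm _ _
    _ ≤ L * ‖(x + t • v) - x‖ * ‖v‖ := by gcongr; exact hlip _ _
    _ = L * t * ‖v‖ ^ 2 := by
      rw [add_sub_cancel_left, norm_smul, Real.norm_eq_abs, abs_of_nonneg ht]
      ring

theorem descent_lemma (hf : Differentiable ℝ f)
    (hlip : ∀ x y : E, ‖gradient f x - gradient f y‖ ≤ L * ‖x - y‖) (x v : E) :
    f (x + v) ≤ f x + ⟪gradient f x, v⟫ + L / 2 * ‖v‖ ^ 2 := by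
  set gap : ℝ → ℝ := fun t =>
    f x + t * ⟪gradient f x, v⟫ + L / 2 * t ^ 2 * ‖v‖ ^ 2 - f (x + t • v)
  have hgap : ∀ t, HasDerivAt gap
      (⟪gradient f x, v⟫ + L * t * ‖v‖ ^ 2 - ⟪gradient f (x + t • v), v⟫) t := by
    intro t
    have hmodel := ((hasDerivAt_id t).mul_const ⟪gradient f x, v⟫).const_add (f x) |>.add
      (((hasDerivAt_pow 2 t).const_mul (L / 2)).mul_const (‖v‖ ^ 2))
    refine (hmodel.sub (hasDerivAt_comp_add_smul (hf _))).congr_deriv ?_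
    simp only [Nat.cast_ofNat, Nat.add_one_sub_one, pow_one]
    ring
  have hmono : MonotoneOn gap (Set.Icc 0 1) := by
    refine monotoneOn_of_deriv_nonneg (convex_Icc 0 1)
      (fun t _ => (hgap t).continuousAt.continuousWithinAt)
      (fun t _ => (hgap t).differentiableAt.differentiableWithinAt) fun t ht => ?_
    rw [interior_Icc] at ht
    have := inner_gradient_add_smul_sub_le hlip x v ht.1.le
    rw [inner_sub_left] at this
    rw [(hgap t).deriv]
    linarith
  have h01 := hmono (by simp) (by simp) zero_le_one
  simp only [gap, zero_smul, add_zero, one_smul, zero_mul, one_mul, ne_eq, OfNat.ofNat_ne_zero,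
    not_false_eq_true, zero_pow, mul_zero, one_pow] at h01
  linarith

theorem descent_lemma_of_mul_le_one (hf : Differentiable ℝ f)
    (hlip : ∀ x y : E, ‖gradient f x - gradient f y‖ ≤ L * ‖x - y‖)
    {l : ℝ} (hl : 0 < l) (hLl : L * l ≤ 1) (x z : E) :
    f z ≤ f x + ⟪gradient f x, z - x⟫ + ‖z - x‖ ^ 2 / (2 * l) := by
  have hquad : L / 2 * ‖z - x‖ ^ 2 ≤ ‖z - x‖ ^ 2 / (2 * l) := by
    rw [le_div_iff₀ (by positivity)]
    nlinarith [sq_nonneg ‖z - x‖]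
  have hdesc := descent_lemma hf hlip x (z - x)
  rw [add_sub_cancel] at hdesc
  linarith

end DescentLemma

theorem ciInf_ciInf_eq_ciInf_of_le_of_diag {ι α : Type*} [Nonempty ι]
    [ConditionallyCompleteLattice α] {F : ι → ι → α} {g : ι → α}
    (hg : BddBelow (Set.range g)) (hle : ∀ x z, g z ≤ F x z) (hdiag : ∀ x, F x x = g x) :
    ⨅ x, ⨅ z, F x z = ⨅ x, g x := by
  obtain ⟨m, hm⟩ := hg
  have hFm : ∀ x z, m ≤ F x z := fun x z => (hm ⟨z, rfl⟩).trans (hle x z)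
  have hFbdd : ∀ x, BddBelow (Set.range (F x)) := fun x => ⟨m, Set.forall_mem_range.2 (hFm x)⟩
  apply le_antisymm
  · exact ciInf_mono ⟨m, Set.forall_mem_range.2 fun x => le_ciInf (hFm x)⟩
      fun x => hdiag x ▸ ciInf_le (hFbdd x) x
  · exact le_ciInf fun x => le_ciInf fun z => (ciInf_le ⟨m, hm⟩ z).trans (hle x z)

theorem fbe_inf_eq_inf_general
    {E : Type*} [NormedAddCommGroup E] [InnerProductSpace ℝ E] [FiniteDimensional ℝ E]
    (f : E → ℝ) (hf : Differentiable ℝ f)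
    (L : ℝ)
    (hlip : ∀ x y : E, ‖gradient f x - gradient f y‖ ≤ L * ‖x - y‖)
    (ψ : E → ℝ) (l : ℝ) (hl : l ∈ Set.Ioo 0 (1 / L))
    (hbdd : BddBelow (Set.range fun x : E => f x + ψ x)) :
    (⨅ x : E, ⨅ z : E, (f x + ⟪gradient f x, z - x⟫ + ψ z + ‖z - x‖ ^ 2 / (2 * l))) =
      ⨅ x : E, (f x + ψ x) := by
  obtain ⟨hl0, hlL⟩ := hl
  have hL : 0 < L := one_div_pos.mp (hl0.trans hlL)
  have hLl : L * l ≤ 1 := ((lt_div_iff₀' hL).mp (by simpa using hlL)).le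
  refine ciInf_ciInf_eq_ciInf_of_le_of_diag hbdd (fun x z => ?_) fun x => by simp
  linarith [descent_lemma_of_mul_le_one hf hlip hl0 hLl x z]

/-- Remark 5.3: for `λ ∈ (0, 1/L)` the infimum of the forward–backward envelope
equals the infimum of `f + ψ`. -/
theorem fbe_inf_eq_inf
    {E : Type*} [NormedAddCommGroup E] [InnerProductSpace ℝ E] [FiniteDimensional ℝ E]
    (f : E → ℝ) (hf : Differentiable ℝ f)
    (L : ℝ) (hL : 0 < L)
    (hlip : ∀ x y : E, ‖gradient f x - gradient f y‖ ≤ L * ‖x - y‖)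
    (ψ : E → ℝ) (l : ℝ) (hl : l ∈ Set.Ioo 0 (1 / L))
    (hbdd : BddBelow (Set.range fun x : E => f x + ψ x)) :
    (⨅ x : E, ⨅ z : E, (f x + ⟪gradient f x, z - x⟫ + ψ z + ‖z - x‖ ^ 2 / (2 * l))) =
      ⨅ x : E, (f x + ψ x) :=
  fbe_inf_eq_inf_general f hf L hlip ψ l hl hbdd
end

section
/- Let E be a finite-dimensional real inner product space, let g : E → ℝ be twice differentiable at x̄ with Hessian H := ∇²g(x̄) (a self-adjoint linear map) satisfying ⟨H d, d⟩ ≥ ξ‖d‖² for all d ∈ E and some ξ ∈ ℝ, let h : E → ℝ be differentiable at x̄, and set φ := g − h and w := ∇φ(x̄) = ∇g(x̄) − ∇h(x̄). Assume w ≠ 0, let ζ > 0 and ρ ≥ ζ − ξ. Then: (1) there exists a nonzero d ∈ E with H d + ρ d = −w; (2) every d satisfying H d + ρ d = −w satisfies ⟨w, d⟩ ≤ −ζ‖d‖² (in particular d ≠ 0); and (3) for every such d and every σ ∈ (0,1) there exists η > 0 such that φ(x̄ + τ d) < φ(x̄) + σ τ ⟨w, d⟩ ≤ φ(x̄) − σ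 ζ τ ‖d‖² for all τ ∈ (0, η). -/
open scoped RealInnerProductSpace
open Filter Topology

/-!
The shifted operator `T = H + ρ • id` is `ζ`-coercive, since `⟪T u, u⟫ ≥ (ξ + ρ) ‖u‖² ≥ ζ ‖u‖²`.
Coercivity makes `T` injective, hence bijective in finite dimension, so `T d = -w` is solvable;
pairing the equation with `d` gives `⟪w, d⟫ = -⟪T d, d⟫ ≤ -ζ ‖d‖²`, and `d ≠ 0` because `w ≠ 0`.
Thus `d` is a direction of strict descent for `φ = g - h`, whose directional derivative at `x̄`
is `⟪w, d⟫ < σ ⟪w, d⟫`, and the Armijo inequality holds for all small step sizes.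
-/

section Coercive

variable {E : Type*} [NormedAddCommGroup E] [InnerProductSpace ℝ E]

theorem mul_norm_sq_le_inner_add_smul {H : E → E} {ξ ζ ρ : ℝ}
    (hlow : ∀ u, ξ * ‖u‖ ^ 2 ≤ ⟪H u, u⟫) (hρ : ζ - ξ ≤ ρ) (u : E) :
    ζ * ‖u‖ ^ 2 ≤ ⟪H u + ρ • u, u⟫ := by
  rw [inner_add_left, real_inner_smul_left, real_inner_self_eq_norm_sq]
  nlinarith [hlow u, sq_nonneg ‖u‖]

theorem LinearMap.surjective_of_coercive [FiniteDimensional ℝ E] (T : E →ₗ[ℝ] E) {c : ℝ}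
    (hc : 0 < c) (hT : ∀ u, c * ‖u‖ ^ 2 ≤ ⟪T u, u⟫) : Function.Surjective T := by
  refine LinearMap.injective_iff_surjective.mp <| (injective_iff_map_eq_zero T).mpr fun u hu => ?_
  have hle := hT u
  rw [hu, inner_zero_left] at hle
  have : ‖u‖ ^ 2 = 0 := le_antisymm (nonpos_of_mul_nonpos_right hle hc) (sq_nonneg _)
  simpa using this

end Coercive

theorem HasLineDerivAt.exists_pos_forall_lt_add_mul {E : Type*} [AddCommGroup E] [Module ℝ E]
    [TopologicalSpace E] {f : E → ℝ} {f' c : ℝ} {x v : E}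
    (hf : HasLineDerivAt ℝ f f' x v) (hc : f' < c) :
    ∃ η > 0, ∀ t ∈ Set.Ioo 0 η, f (x + t • v) < f x + c * t := by
  have hslope : ∀ᶠ t in 𝓝[>] (0 : ℝ), t⁻¹ • (f (x + t • v) - f x) < c :=
    hf.tendsto_slope_zero_right.eventually_lt_const hc
  obtain ⟨η, hη, hsub⟩ := mem_nhdsGT_iff_exists_Ioo_subset.mp (hslope.and self_mem_nhdsWithin)
  refine ⟨η, hη, fun t ht => ?_⟩
  obtain ⟨hlt, htpos⟩ := hsub ht
  rw [smul_eq_mul, inv_mul_lt_iff₀ htpos] at hlt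
  linarith

theorem rcsn_direction_exists_and_descent_general
    {E : Type*} [NormedAddCommGroup E] [InnerProductSpace ℝ E] [FiniteDimensional ℝ E]
    (g h : E → ℝ) (xb : E)
    (hgd : DifferentiableAt ℝ g xb) (hhd : DifferentiableAt ℝ h xb)
    (H : E →L[ℝ] E)
    (ξ : ℝ) (hlow : ∀ u : E, ξ * ‖u‖ ^ 2 ≤ ⟪H u, u⟫)
    (φ : E → ℝ) (hφ : ∀ y, φ y = g y - h y)
    (w : E) (hw : w = gradient g xb - gradient h xb) (hw0 : w ≠ 0)
    (ζ ρ : ℝ) (hζ : 0 < ζ) (hρ : ζ - ξ ≤ ρ) :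
    (∃ d : E, d ≠ 0 ∧ H d + ρ • d = -w) ∧
    (∀ d : E, H d + ρ • d = -w → d ≠ 0 ∧ ⟪w, d⟫ ≤ -ζ * ‖d‖ ^ 2) ∧
    (∀ d : E, H d + ρ • d = -w → ∀ σ : ℝ, σ ∈ Set.Ioo (0 : ℝ) 1 →
      ∃ η > (0 : ℝ), ∀ τ : ℝ, τ ∈ Set.Ioo 0 η →
        φ (xb + τ • d) < φ xb + σ * τ * ⟪w, d⟫ ∧
        φ xb + σ * τ * ⟪w, d⟫ ≤ φ xb - σ * ζ * τ * ‖d‖ ^ 2) := by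
  have hcoer := mul_norm_sq_le_inner_add_smul hlow hρ
  have hdescent : ∀ d : E, H d + ρ • d = -w → d ≠ 0 ∧ ⟪w, d⟫ ≤ -ζ * ‖d‖ ^ 2 := by
    intro d hd
    refine ⟨fun hd0 => hw0 ?_, ?_⟩
    · simpa [hd0] using hd.symm
    · have := hcoer d
      rw [hd, inner_neg_left] at this
      linarith
  obtain ⟨d₀, hd₀⟩ := LinearMap.surjective_of_coercive ((H : E →ₗ[ℝ] E) + ρ • LinearMap.id) hζ
    (by simpa using hcoer) (-w)
  simp only [LinearMap.add_apply, LinearMap.smul_apply, LinearMap.id_apply,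
    ContinuousLinearMap.coe_coe] at hd₀
  refine ⟨⟨d₀, (hdescent d₀ hd₀).1, hd₀⟩, hdescent, fun d hd σ hσ => ?_⟩
  obtain ⟨hd0, hwd⟩ := hdescent d hd
  have hwd_neg : ⟪w, d⟫ < 0 := hwd.trans_lt (by nlinarith [mul_pos hζ (pow_pos (norm_pos_iff.mpr hd0) 2)])
  have hline : HasLineDerivAt ℝ φ ⟪w, d⟫ xb d := by
    rw [show φ = g - h from funext hφ, hw, inner_sub_left, inner_gradient_left,
      inner_gradient_left]
    exact (hgd.hasFDerivAt.sub hhd.hasFDerivAt).hasLineDerivAt d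
  obtain ⟨η, hη, harmijo⟩ := hline.exists_pos_forall_lt_add_mul (c := σ * ⟪w, d⟫)
    (by nlinarith [hσ.2])
  refine ⟨η, hη, fun τ hτ => ⟨by linarith [harmijo τ hτ], ?_⟩⟩
  nlinarith [mul_le_mul_of_nonneg_left hwd (mul_pos hσ.1 hτ.1).le]

/-- Smooth instance of Lemma 3.2: existence of descent directions for the regularized
coderivative-based Newton step, and the descent estimates they satisfy. -/
theorem rcsn_direction_exists_and_descent
    {E : Type*} [NormedAddCommGroup E] [InnerProductSpace ℝ E] [FiniteDimensional ℝ E]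
    (g h : E → ℝ) (xb : E)
    (hgd : DifferentiableAt ℝ g xb) (hhd : DifferentiableAt ℝ h xb)
    (H : E →L[ℝ] E) (hH : HasFDerivAt (gradient g) H xb)
    (hsa : ∀ u v : E, ⟪H u, v⟫ = ⟪u, H v⟫)
    (ξ : ℝ) (hlow : ∀ u : E, ξ * ‖u‖ ^ 2 ≤ ⟪H u, u⟫)
    (φ : E → ℝ) (hφ : ∀ y, φ y = g y - h y)
    (w : E) (hw : w = gradient g xb - gradient h xb) (hw0 : w ≠ 0)
    (ζ ρ : ℝ) (hζ : 0 < ζ) (hρ : ζ - ξ ≤ ρ) :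
    (∃ d : E, d ≠ 0 ∧ H d + ρ • d = -w) ∧
    (∀ d : E, H d + ρ • d = -w → d ≠ 0 ∧ ⟪w, d⟫ ≤ -ζ * ‖d‖ ^ 2) ∧
    (∀ d : E, H d + ρ • d = -w → ∀ σ : ℝ, σ ∈ Set.Ioo (0 : ℝ) 1 →
      ∃ η > (0 : ℝ), ∀ τ : ℝ, τ ∈ Set.Ioo 0 η →
        φ (xb + τ • d) < φ xb + σ * τ * ⟪w, d⟫ ∧
        φ xb + σ * τ * ⟪w, d⟫ ≤ φ xb - σ * ζ * τ * ‖d‖ ^ 2) :=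
  rcsn_direction_exists_and_descent_general g h xb hgd hhd H ξ hlow φ hφ w hw hw0 ζ ρ hζ hρ
end

section
/- In the smooth RCSN setting, suppose φ is bounded below on E. Then: (1) φ(x_{k+1}) < φ(x_k) for every k, and the sequence (φ(x_k)) converges; and (2) if some subsequence (x_{k_j}) converges to a point x̄, then ∇φ(x̄) = 0 and φ(x̄) = inf_{k∈ℕ} φ(x_k). -/
/-!
Sufficient decrease gives `φ (x k) - φ (x (k + 1)) ≥ σ ζ τ_k ‖d_k‖²`, so `φ (x k)` decreases to
its infimum and `τ_k ‖d_k‖² → 0`. Near a cluster point `x̄` the gradient of `φ` is `K`-Lipschitz,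
and by the descent lemma a rejected trial step `τ_k / β` is at least `(1 - σ) ζ / K`. Hence `τ_k`
stays bounded below along the subsequence, so `d_k → 0` there, and
`∇φ (x_k) = -(∇²g (x_k) + ρ_k) d_k → 0`.
-/

open scoped RealInnerProductSpace Gradient
open Filter Topology Metric

section

variable {E : Type*} [NormedAddCommGroup E] [InnerProductSpace ℝ E] [CompleteSpace E]

theorem gradient_fun_sub {f g : E → ℝ} {x : E} (hf : DifferentiableAt ℝ f x)
    (hg : DifferentiableAt ℝ g x) : ∇ (fun y => f y - g y) x = ∇ f x - ∇ g x := by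
  refine HasGradientAt.gradient ?_
  rw [hasGradientAt_iff_hasFDerivAt, map_sub]
  exact hf.hasGradientAt.hasFDerivAt.sub hg.hasGradientAt.hasFDerivAt

theorem ContDiff.gradient {f : E → ℝ} {m n : WithTop ℕ∞} (hf : ContDiff ℝ n f)
    (hmn : m + 1 ≤ n) : ContDiff ℝ m (∇ f) :=
  (InnerProductSpace.toDual ℝ E).symm.toContinuousLinearEquiv.contDiff.comp (hf.fderiv_right hmn)

theorem locallyLipschitz_gradient_sub {g h : E → ℝ} (hg : ContDiff ℝ 2 g)
    (hh : Differentiable ℝ h) (hhl : LocallyLipschitz (∇ h)) :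
    LocallyLipschitz (∇ fun y => g y - h y) := by
  have hsub : ∇ (fun y => g y - h y) = ∇ g - ∇ h :=
    funext fun y => gradient_fun_sub (hg.differentiable two_ne_zero y) (hh y)
  rw [hsub]
  exact (hg.gradient (m := 1) le_rfl).locallyLipschitz.sub hhl

/-- The descent lemma, with `K` in place of the sharp constant `K / 2`. -/
theorem Convex.le_add_inner_gradient_add_of_lipschitzOnWith {f : E → ℝ} {s : Set E} {K : NNReal}
    {x y : E} (hs : Convex ℝ s) (hf : ∀ z ∈ s, DifferentiableAt ℝ f z)
    (hK : LipschitzOnWith K (∇ f) s) (hx : x ∈ s) (hy : y ∈ s) :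
    f y ≤ f x + ⟪∇ f x, y - x⟫ + K * ‖y - x‖ ^ 2 := by
  have bound : ∀ z ∈ s ∩ closedBall x ‖y - x‖, ‖fderiv ℝ f z - fderiv ℝ f x‖ ≤ K * ‖y - x‖ := by
    rintro z ⟨hzs, hzx⟩
    rw [← toDual_gradient, ← toDual_gradient, ← map_sub, LinearIsometryEquiv.norm_map]
    exact hK.norm_sub_le_of_le hzs hx (by rwa [← dist_eq_norm])
  have hmvt := (hs.inter (convex_closedBall x ‖y - x‖)).norm_image_sub_le_of_norm_fderiv_le'
    (fun z hz => hf z hz.1) bound ⟨hx, mem_closedBall_self (norm_nonneg _)⟩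
    ⟨hy, by rw [mem_closedBall, dist_eq_norm]⟩
  rw [← inner_gradient_left, Real.norm_eq_abs] at hmvt
  nlinarith [le_abs_self (f y - f x - ⟪∇ f x, y - x⟫)]

theorem one_sub_mul_lt_of_armijo_violated {f : E → ℝ} {s : Set E} {K : NNReal} {x d : E}
    {σ ζ t : ℝ} (hs : Convex ℝ s) (hf : ∀ z ∈ s, DifferentiableAt ℝ f z)
    (hK : LipschitzOnWith K (∇ f) s) (hx : x ∈ s) (hxt : x + t • d ∈ s) (ht : 0 < t)
    (hd : d ≠ 0) (hσ : σ ≤ 1) (hdesc : ⟪∇ f x, d⟫ ≤ -ζ * ‖d‖ ^ 2)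
    (hfail : f x + σ * t * ⟪∇ f x, d⟫ < f (x + t • d)) :
    (1 - σ) * ζ < K * t := by
  have hup := hs.le_add_inner_gradient_add_of_lipschitzOnWith hf hK hx hxt
  rw [add_sub_cancel_left, real_inner_smul_right, norm_smul, Real.norm_of_nonneg ht.le] at hup
  have hdpos : 0 < ‖d‖ := norm_pos_iff.2 hd
  have key : t * ‖d‖ ^ 2 * ((1 - σ) * ζ) < t * ‖d‖ ^ 2 * (K * t) := by
    nlinarith [mul_le_mul_of_nonneg_left hdesc (by nlinarith : 0 ≤ (1 - σ) * t)]
  exact lt_of_mul_lt_mul_left key (by positivity)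

theorem tendsto_zero_of_mul_le_sub_succ {u a : ℕ → ℝ} {c L : ℝ} (hc : 0 < c)
    (ha : ∀ k, 0 ≤ a k) (hle : ∀ k, c * a k ≤ u k - u (k + 1))
    (hu : Tendsto u atTop (𝓝 L)) : Tendsto a atTop (𝓝 0) := by
  refine squeeze_zero ha (fun k => (le_div_iff₀' hc).2 (hle k)) ?_
  simpa using (hu.sub (hu.comp (tendsto_add_atTop_nat 1))).div_const c

theorem tendsto_min_mul_of_tendsto_mul_sq {ι : Type*} {l : Filter ι} {a b : ι → ℝ} {T : ℝ}
    (ha : ∀ i, 0 ≤ a i) (hb : ∀ i, 0 ≤ b i) (hT : 0 ≤ T)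
    (h : Tendsto (fun i => a i * b i ^ 2) l (𝓝 0)) :
    Tendsto (fun i => min (a i) T * b i) l (𝓝 0) := by
  have hsqrt : Tendsto (fun i => √(T * (a i * b i ^ 2))) l (𝓝 0) := by
    simpa using (h.const_mul T).sqrt
  refine squeeze_zero (fun i => mul_nonneg (le_min (ha i) hT) (hb i)) (fun i => ?_) hsqrt
  have hm : min (a i) T ^ 2 ≤ T * a i := by
    rw [sq]; exact mul_le_mul (min_le_right _ _) (min_le_left _ _) (le_min (ha i) hT) hT
  refine Real.le_sqrt_of_sq_le ?_
  nlinarith [sq_nonneg (b i)]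

theorem exists_pos_eventually_le_of_backtracking {ι : Type*} {l : Filter ι} {f : E → ℝ}
    {x d : ι → E} {τ : ι → ℝ} {xb : E} {σ β ζ tmin : ℝ} (hf : Differentiable ℝ f)
    (hL : LocallyLipschitz (∇ f)) (hσ : σ < 1) (hβ : 0 < β) (hζ : 0 < ζ) (htmin : 0 < tmin)
    (hd : ∀ i, d i ≠ 0) (hτ : ∀ i, 0 < τ i) (hdesc : ∀ i, ⟪∇ f (x i), d i⟫ ≤ -ζ * ‖d i‖ ^ 2)
    (hbt : ∀ i, tmin ≤ τ i ∨
      f (x i) + σ * (τ i / β) * ⟪∇ f (x i), d i⟫ < f (x i + (τ i / β) • d i))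
    (hx : Tendsto x l (𝓝 xb)) (hsmall : Tendsto (fun i => min (τ i) tmin * ‖d i‖) l (𝓝 0)) :
    ∃ c ∈ Set.Ioc 0 tmin, ∀ᶠ i in l, c ≤ τ i := by
  obtain ⟨K, U, hU, hK⟩ := hL xb
  obtain ⟨r, hr, hrU⟩ := Metric.mem_nhds_iff.1 hU
  have hσ' : 0 < 1 - σ := sub_pos.2 hσ
  refine ⟨min tmin (β * ((1 - σ) * ζ) / (K + 1)), ⟨lt_min htmin (by positivity), min_le_left _ _⟩,
    ?_⟩
  filter_upwards [hx.eventually_mem (ball_mem_nhds xb (half_pos hr)),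
    hsmall.eventually (gt_mem_nhds (by positivity : 0 < β * (r / 2)))] with i hxi hdi
  refine (hbt i).elim (fun h => (min_le_left _ _).trans h) fun hfail => ?_
  by_contra! hlt
  have hτT : τ i < tmin := hlt.trans_le (min_le_left _ _)
  rw [min_eq_left hτT.le] at hdi
  have ht : 0 < τ i / β := div_pos (hτ i) hβ
  have hstep : x i + (τ i / β) • d i ∈ ball xb r := by
    have hnorm : ‖(τ i / β) • d i‖ < r / 2 := by
      rw [norm_smul, Real.norm_of_nonneg ht.le, div_mul_eq_mul_div, div_lt_iff₀ hβ]
      linarith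
    rw [mem_ball] at hxi ⊢
    calc dist (x i + (τ i / β) • d i) xb ≤ dist (x i + (τ i / β) • d i) (x i) + dist (x i) xb :=
          dist_triangle _ _ _
      _ < r := by rw [dist_self_add_left]; linarith
  have hlow := one_sub_mul_lt_of_armijo_violated (convex_ball xb r) (fun z _ => hf z)
    (hK.mono hrU) (ball_subset_ball (half_le_self hr.le) hxi) hstep ht (hd i) hσ.le
    (hdesc i) hfail
  have hcτ : β * ((1 - σ) * ζ) / (K + 1) ≤ τ i := by
    rw [div_le_iff₀ (by positivity)]
    rw [mul_div_assoc', lt_div_iff₀ hβ] at hlow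
    nlinarith [hτ i]
  exact (hlt.trans_le (min_le_right _ _)).not_ge hcτ

theorem tendsto_of_tendsto_min_mul_of_eventually_le {ι : Type*} {l : Filter ι} {a b : ι → ℝ}
    {c T : ℝ} (hc : 0 < c) (hcT : c ≤ T) (hb : ∀ i, 0 ≤ b i) (hca : ∀ᶠ i in l, c ≤ a i)
    (h : Tendsto (fun i => min (a i) T * b i) l (𝓝 0)) : Tendsto b l (𝓝 0) := by
  refine squeeze_zero' (Eventually.of_forall hb) ?_ (by simpa using h.div_const c)
  filter_upwards [hca] with i hi
  rw [le_div_iff₀ hc, mul_comm]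
  exact mul_le_mul_of_nonneg_right (le_min hi hcT) (hb i)

end

theorem tendsto_apply_add_smul_zero {F ι : Type*} [NormedAddCommGroup F] [NormedSpace ℝ F]
    {l : Filter ι} {H : F → F →L[ℝ] F} {x d : ι → F} {ρ : ι → ℝ} {xb : F} {ρmax : ℝ}
    (hH : Continuous H) (hρ : ∀ i, ρ i ∈ Set.Icc 0 ρmax) (hx : Tendsto x l (𝓝 xb))
    (hd : Tendsto d l (𝓝 0)) :
    Tendsto (fun i => H (x i) (d i) + ρ i • d i) l (𝓝 0) := by
  have hHd : Tendsto (fun i => H (x i) (d i)) l (𝓝 0) := by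
    simpa [Function.comp_def] using (isBoundedBilinearMap_apply.continuous.tendsto (H xb, 0)).comp
      (((hH.tendsto xb).comp hx).prodMk_nhds hd)
  have hρd : Tendsto (fun i => ρ i • d i) l (𝓝 0) :=
    IsBoundedUnder.smul_tendsto_zero ⟨ρmax, eventually_map.2 <| .of_forall fun i => by
      simpa [abs_of_nonneg (hρ i).1] using (hρ i).2⟩ hd
  simpa using hHd.add hρd

theorem rcsn_descent_and_stationarity_general
    {E : Type*} [NormedAddCommGroup E] [InnerProductSpace ℝ E] [FiniteDimensional ℝ E]
    (g h : E → ℝ) (hg : ContDiff ℝ 2 g) (hh : Differentiable ℝ h)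
    (hhl : LocallyLipschitz (gradient h))
    (φ : E → ℝ) (hφ : ∀ y, φ y = g y - h y)
    (σ β ζ tmin ρmax : ℝ)
    (hσ : σ ∈ Set.Ioo (0 : ℝ) 1) (hβ : β ∈ Set.Ioo (0 : ℝ) 1)
    (hζ : 0 < ζ) (htmin : 0 < tmin)
    (x d : ℕ → E) (τ ρ : ℕ → ℝ)
    (hρk : ∀ k, ρ k ∈ Set.Icc 0 ρmax)
    (hdne : ∀ k, d k ≠ 0)
    (hdir : ∀ k, fderiv ℝ (gradient g) (x k) (d k) + ρ k • d k = -(gradient φ (x k)))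
    (hdesc : ∀ k, ⟪gradient φ (x k), d k⟫ ≤ -ζ * ‖d k‖ ^ 2)
    (hτpos : ∀ k, 0 < τ k)
    (hls : ∀ k, φ (x k + τ k • d k) ≤ φ (x k) + σ * τ k * ⟪gradient φ (x k), d k⟫)
    (hbt : ∀ k, tmin ≤ τ k ∨
      φ (x k) + σ * (τ k / β) * ⟪gradient φ (x k), d k⟫ < φ (x k + (τ k / β) • d k))
    (hupd : ∀ k, x (k + 1) = x k + τ k • d k)
    (hbdd : BddBelow (Set.range φ))
    :
    (∀ k, φ (x (k + 1)) < φ (x k)) ∧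
    (∃ L : ℝ, Tendsto (fun k => φ (x k)) atTop (𝓝 L)) ∧
    (∀ s : ℕ → ℕ, StrictMono s → ∀ xb : E,
      Tendsto (fun j => x (s j)) atTop (𝓝 xb) →
        gradient φ xb = 0 ∧ φ xb = ⨅ k, φ (x k)) := by
  obtain ⟨hσ0, hσ1⟩ := hσ
  have hφeq : φ = fun y => g y - h y := funext hφ
  have hφd : Differentiable ℝ φ := hφeq ▸ (hg.differentiable two_ne_zero).sub hh
  have hφL : LocallyLipschitz (∇ φ) := hφeq ▸ locallyLipschitz_gradient_sub hg hh hhl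
  have hdecr : ∀ k, σ * ζ * (τ k * ‖d k‖ ^ 2) ≤ φ (x k) - φ (x (k + 1)) := fun k => by
    rw [hupd]; nlinarith [hls k, hdesc k, mul_pos hσ0 (hτpos k)]
  have hmono : ∀ k, φ (x (k + 1)) < φ (x k) := fun k => by
    have := mul_pos (mul_pos hσ0 hζ) (mul_pos (hτpos k) (pow_pos (norm_pos_iff.2 (hdne k)) 2))
    linarith [hdecr k]
  have hlim : Tendsto (fun k => φ (x k)) atTop (𝓝 (⨅ k, φ (x k))) :=
    tendsto_atTop_ciInf (antitone_nat_of_succ_le fun k => (hmono k).le)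
      (hbdd.mono (Set.range_comp_subset_range x φ))
  refine ⟨hmono, ⟨_, hlim⟩, fun s hs xb hxs => ⟨?_, tendsto_nhds_unique
    ((hφd.continuous.tendsto xb).comp hxs) (hlim.comp hs.tendsto_atTop)⟩⟩
  have hstep : Tendsto (fun k => τ k * ‖d k‖ ^ 2) atTop (𝓝 0) :=
    tendsto_zero_of_mul_le_sub_succ (mul_pos hσ0 hζ)
      (fun k => mul_nonneg (hτpos k).le (sq_nonneg _)) hdecr hlim
  have hsmall := (tendsto_min_mul_of_tendsto_mul_sq (fun k => (hτpos k).le)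
    (fun k => norm_nonneg (d k)) htmin.le hstep).comp hs.tendsto_atTop
  obtain ⟨c, ⟨hc, hcT⟩, hτc⟩ := exists_pos_eventually_le_of_backtracking hφd hφL hσ1 hβ.1 hζ
    htmin (fun j => hdne (s j)) (fun j => hτpos (s j)) (fun j => hdesc (s j))
    (fun j => hbt (s j)) hxs hsmall
  have hd : Tendsto (fun j => d (s j)) atTop (𝓝 0) := tendsto_zero_iff_norm_tendsto_zero.2 <|
    tendsto_of_tendsto_min_mul_of_eventually_le hc hcT (fun j => norm_nonneg _) hτc hsmall
  have hw : Tendsto (fun j => ∇ φ (x (s j))) atTop (𝓝 0) := by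
    simpa [hdir] using (tendsto_apply_add_smul_zero
      ((hg.gradient (m := 1) le_rfl).continuous_fderiv one_ne_zero) (fun j => hρk (s j)) hxs hd).neg
  exact tendsto_nhds_unique ((hφL.continuous.tendsto xb).comp hxs) hw

theorem rcsn_descent_and_stationarity
    {E : Type*} [NormedAddCommGroup E] [InnerProductSpace ℝ E] [FiniteDimensional ℝ E]
    (g h : E → ℝ) (hg : ContDiff ℝ 2 g) (hh : Differentiable ℝ h)
    (hhl : LocallyLipschitz (gradient h))
    (φ : E → ℝ) (hφ : ∀ y, φ y = g y - h y)
    (σ β ζ tmin ρmax : ℝ)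
    (hσ : σ ∈ Set.Ioo (0 : ℝ) 1) (hβ : β ∈ Set.Ioo (0 : ℝ) 1)
    (hζ : 0 < ζ) (htmin : 0 < tmin) (hρmax : 0 ≤ ρmax)
    (x d : ℕ → E) (τ ρ : ℕ → ℝ)
    (hwne : ∀ k, gradient φ (x k) ≠ 0)
    (hρk : ∀ k, ρ k ∈ Set.Icc 0 ρmax)
    (hdne : ∀ k, d k ≠ 0)
    (hdir : ∀ k, fderiv ℝ (gradient g) (x k) (d k) + ρ k • d k = -(gradient φ (x k)))
    (hdesc : ∀ k, ⟪gradient φ (x k), d k⟫ ≤ -ζ * ‖d k‖ ^ 2)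
    (hτpos : ∀ k, 0 < τ k)
    (hls : ∀ k, φ (x k + τ k • d k) ≤ φ (x k) + σ * τ k * ⟪gradient φ (x k), d k⟫)
    (hbt : ∀ k, tmin ≤ τ k ∨
      φ (x k) + σ * (τ k / β) * ⟪gradient φ (x k), d k⟫ < φ (x k + (τ k / β) • d k))
    (hupd : ∀ k, x (k + 1) = x k + τ k • d k)
    (hbdd : BddBelow (Set.range φ))
    :
    (∀ k, φ (x (k + 1)) < φ (x k)) ∧
    (∃ L : ℝ, Tendsto (fun k => φ (x k)) atTop (𝓝 L)) ∧
    (∀ s : ℕ → ℕ, StrictMono s → ∀ xb : E,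
      Tendsto (fun j => x (s j)) atTop (𝓝 xb) →
        gradient φ xb = 0 ∧ φ xb = ⨅ k, φ (x k)) :=
  rcsn_descent_and_stationarity_general g h hg hh hhl φ hφ σ β ζ tmin ρmax hσ hβ hζ htmin x d τ ρ
    hρk hdne hdir hdesc hτpos hls hbt hupd hbdd
end

section
/- Single-step Kurdyka–Łojasiewicz descent estimate (smooth case). Let E be a finite-dimensional real inner product space, g : E → ℝ twice continuously differentiable, h : E → ℝ differentiable, φ := g − h. Fix σ ∈ (0,1), ζ > 0, ρ ≥ 0, points x, x̄ ∈ E, a direction d ∈ E, a stepsize τ > 0, and set w := ∇φ(x) and x⁺ := x + τ d. Let η > 0 and let ψ : [0,η] → [0,∞) be continuous, concave, with ψ(0) = 0 and ψ differentiable with ψ' > 0 on (0,η). Assume: ∇²g(x) d + ρ d = −w; ⟨w, d⟩ ≤ −ζ‖d‖²; φ(x⁺) ≤ φ(x) + σ τ ⟨w, d⟩; φ(x̄) ≤ φ(x⁺) and φ(x̄) < φ(x) < φ(x̄) + η; and the KL inequality ψ'(φ(x) − φ(x̄)) · ‖w‖ ≥ 1. Then ‖x − x⁺‖ ≤ ((K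 + ρ)/(σ ζ)) · ( ψ(φ(x) − φ(x̄)) − ψ(φ(x⁺) − φ(x̄)) ), where K := ‖∇²g(x)‖ is the operator norm of the Hessian of g at x. -/
open scoped RealInnerProductSpace

/-- Single-step Kurdyka–Łojasiewicz descent estimate (smooth case, Claim 1 in the proof of
Theorem 4.1): the step length is bounded by the decrease of the desingularizing function
applied to the objective gap. -/
theorem kl_single_step_estimate
    {E : Type*} [NormedAddCommGroup E] [InnerProductSpace ℝ E] [FiniteDimensional ℝ E]
    (g h : E → ℝ) (hg : ContDiff ℝ 2 g) (hh : Differentiable ℝ h)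
    (φ : E → ℝ) (hφ : ∀ y, φ y = g y - h y)
    (σ ζ ρ : ℝ) (hσ : σ ∈ Set.Ioo (0 : ℝ) 1) (hζ : 0 < ζ) (hρ : 0 ≤ ρ)
    (x xb dvec : E) (τ : ℝ) (hτ : 0 < τ)
    (w : E) (hw : w = gradient φ x)
    (xplus : E) (hxplus : xplus = x + τ • dvec)
    (η : ℝ) (hη : 0 < η)
    (ψ ψ' : ℝ → ℝ)
    (hψcont : ContinuousOn ψ (Set.Icc 0 η))
    (hψconc : ConcaveOn ℝ (Set.Icc 0 η) ψ)
    (hψ0 : ψ 0 = 0)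
    (hψnonneg : ∀ t ∈ Set.Icc (0 : ℝ) η, 0 ≤ ψ t)
    (hψderiv : ∀ t ∈ Set.Ioo (0 : ℝ) η, HasDerivAt ψ (ψ' t) t ∧ 0 < ψ' t)
    (hdir : fderiv ℝ (gradient g) x dvec + ρ • dvec = -w)
    (hdesc : ⟪w, dvec⟫ ≤ -ζ * ‖dvec‖ ^ 2)
    (hls : φ xplus ≤ φ x + σ * τ * ⟪w, dvec⟫)
    (hord1 : φ xb ≤ φ xplus) (hord2 : φ xb < φ x) (hord3 : φ x < φ xb + η)
    (hKL : 1 ≤ ψ' (φ x - φ xb) * ‖w‖) :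
    ‖x - xplus‖ ≤ ((‖fderiv ℝ (gradient g) x‖ + ρ) / (σ * ζ)) *
      (ψ (φ x - φ xb) - ψ (φ xplus - φ xb)) := by
  obtain ⟨hσ0, hσ1⟩ := hσ
  set K := ‖fderiv ℝ (gradient g) x‖ with hK
  set s := φ x - φ xb with hsdef
  set t := φ xplus - φ xb with htdef
  have hs0 : 0 < s := by simp only [hsdef]; linarith
  have hsη : s < η := by simp only [hsdef]; linarith
  have ht0 : 0 ≤ t := by simp only [htdef]; linarith
  have hDnn : (0:ℝ) ≤ ‖dvec‖ := norm_nonneg _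
  have hKnn : (0:ℝ) ≤ K := norm_nonneg _
  have hts : t ≤ s - σ * τ * (ζ * ‖dvec‖ ^ 2) := by
    have h1 : σ * τ * ⟪w, dvec⟫ ≤ σ * τ * (-ζ * ‖dvec‖ ^ 2) :=
      mul_le_mul_of_nonneg_left hdesc (by positivity)
    simp only [hsdef, htdef]
    nlinarith
  have hwnorm : ‖w‖ ≤ (K + ρ) * ‖dvec‖ := by
    have hw' : ‖w‖ = ‖fderiv ℝ (gradient g) x dvec + ρ • dvec‖ := by
      rw [hdir, norm_neg]
    rw [hw']
    calc ‖fderiv ℝ (gradient g) x dvec + ρ • dvec‖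
        ≤ ‖fderiv ℝ (gradient g) x dvec‖ + ‖ρ • dvec‖ := norm_add_le _ _
      _ ≤ K * ‖dvec‖ + ρ * ‖dvec‖ := by
          apply add_le_add (ContinuousLinearMap.le_opNorm _ _)
          rw [norm_smul, Real.norm_eq_abs, abs_of_nonneg hρ]
      _ = (K + ρ) * ‖dvec‖ := by ring
  have hs_mem : s ∈ Set.Icc 0 η := ⟨hs0.le, hsη.le⟩
  have hψs := hψderiv s ⟨hs0, hsη⟩
  have key : ∀ u, 0 ≤ u → u < s → ψ' s * (s - u) ≤ ψ s - ψ u := by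
    intro u hu hus
    have hslope := hψconc.le_slope_of_hasDerivAt ⟨hu, by linarith⟩ hs_mem hus hψs.1
    rw [slope_def_field] at hslope
    have hsu : 0 < s - u := by linarith
    calc ψ' s * (s - u) ≤ (ψ s - ψ u) / (s - u) * (s - u) := by
          exact mul_le_mul_of_nonneg_right hslope hsu.le
      _ = ψ s - ψ u := by field_simp
  have hmono : ψ t ≤ ψ s := by
    have hpos0 : 0 ≤ σ * τ * (ζ * ‖dvec‖ ^ 2) := by positivity
    rcases eq_or_lt_of_le (show t ≤ s by linarith) with heq | hlt
    · rw [heq]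
    · nlinarith [key t ht0 hlt, hψs.2, mul_pos hψs.2 (show (0:ℝ) < s - t by linarith)]
  rcases eq_or_ne dvec 0 with hd0 | hd0
  · have hxx : xplus = x := by simp [hxplus, hd0]
    rw [hxx, sub_self, norm_zero]
    have hc : (0:ℝ) ≤ (K + ρ) / (σ * ζ) := by positivity
    exact mul_nonneg hc (by linarith)
  · have hDpos : 0 < ‖dvec‖ := norm_pos_iff.mpr hd0
    have hwpos : 0 < ‖w‖ := by
      rcases eq_or_ne w 0 with hw0 | hw0
      · exfalso
        rw [hw0] at hdesc
        simp only [inner_zero_left] at hdesc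
        nlinarith [pow_pos hDpos 2]
      · exact norm_pos_iff.mpr hw0
    have hKρ : 0 < K + ρ := by
      by_contra hc
      push_neg at hc
      have := mul_nonpos_of_nonpos_of_nonneg hc hDnn
      linarith
    have hpos0 : 0 < σ * τ * (ζ * ‖dvec‖ ^ 2) := by positivity
    have hlt : t < s := by linarith
    have hkey := key t ht0 hlt
    have hA : 0 ≤ ψ s - ψ t := by linarith
    -- (ψ s - ψ t) * (K + ρ) * ‖dvec‖ ≥ (ψ s - ψ t) * ‖w‖ ≥ ψ' s * (s - t) * ‖w‖
    --   ≥ (s - t) ≥ σ τ ζ ‖dvec‖²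
    have h1 : σ * τ * (ζ * ‖dvec‖ ^ 2) ≤ (ψ s - ψ t) * ((K + ρ) * ‖dvec‖) := by
      have e1 : ψ' s * (s - t) * ‖w‖ ≤ (ψ s - ψ t) * ‖w‖ :=
        mul_le_mul_of_nonneg_right hkey hwpos.le
      have e2 : s - t ≤ ψ' s * (s - t) * ‖w‖ := by
        have h := mul_le_mul_of_nonneg_left hKL (show (0:ℝ) ≤ s - t by linarith)
        calc s - t = (s - t) * 1 := by ring
          _ ≤ (s - t) * (ψ' s * ‖w‖) := h
          _ = ψ' s * (s - t) * ‖w‖ := by ring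
      have e3 : (ψ s - ψ t) * ‖w‖ ≤ (ψ s - ψ t) * ((K + ρ) * ‖dvec‖) :=
        mul_le_mul_of_nonneg_left hwnorm hA
      linarith
    have hLHS : ‖x - xplus‖ = τ * ‖dvec‖ := by
      rw [hxplus]
      simp only [sub_add_eq_sub_sub, sub_self, zero_sub, norm_neg, norm_smul,
        Real.norm_eq_abs, abs_of_pos hτ]
    have h1' : σ * τ * ζ * ‖dvec‖ * ‖dvec‖ ≤ (ψ s - ψ t) * (K + ρ) * ‖dvec‖ := by
      calc σ * τ * ζ * ‖dvec‖ * ‖dvec‖ = σ * τ * (ζ * ‖dvec‖ ^ 2) := by ring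
        _ ≤ (ψ s - ψ t) * ((K + ρ) * ‖dvec‖) := h1
        _ = (ψ s - ψ t) * (K + ρ) * ‖dvec‖ := by ring
    have h2 := le_of_mul_le_mul_right h1' hDpos
    rw [hLHS, div_mul_eq_mul_div, le_div_iff₀ (by positivity)]
    calc τ * ‖dvec‖ * (σ * ζ) = σ * τ * ζ * ‖dvec‖ := by ring
      _ ≤ (ψ s - ψ t) * (K + ρ) := h2
      _ = (K + ρ) * (ψ s - ψ t) := by ring
end
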